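/- arXiv:1812.11234 — 6 statements merged into one kernel-verified Lean document; each statement's English description precedes it below -/
import Mathlib

section
/- Let (I, e, d, D, N, θ, (τ_a)) be a Gauss-sum datum, let n be an integer coprime to N and ñ an integer with n·ñ ≡ 1 (mod N), and let (σ, γ, π) be a Galois symmetry of the datum for σ. Then for every integer a, τ_{a·n} = σ(τ_a) · (D / σ(D)) · θ(π(e))^{a·n}. In particular, if τ₁ ≠ 0 then τ_n ≠ 0. -/
/-- **Higher Gauss sums under Galois symmetry** (Theorem 3.5 of the paper, abstracted).
Let `(ι, e, d, D, N, θ, τ)` be a Gauss-sum datum, `n` coprime to `N`, `nt` with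
`n * nt ≡ 1 (mod N)`, and `(σ, γ, g)` a Galois symmetry of the datum.  Then for every
integer `a`, `τ (a*n) = σ (τ a) * (D / σ D) * θ (g e) ^ (a*n)`.  In particular, if
`τ 1 ≠ 0` then `τ n ≠ 0`. -/
theorem higher_gauss_sum_galois
    {ι : Type*} [Fintype ι] (e : ι)
    (d : ι → ℝ) (hd : ∀ X, d X ≠ 0)
    (D : ℝ) (hD : D = ∑ X, (d X) ^ 2)
    (N : ℕ) (hN : 1 ≤ N)
    (θ : ι → ℂ) (hθe : θ e = 1) (hθN : ∀ X, θ X ^ N = 1)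
    (τ : ℤ → ℂ) (hτ : ∀ a : ℤ, τ a = ∑ X, θ X ^ a * ((d X : ℂ)) ^ 2)
    (n nt : ℤ) (hn : Int.gcd n N = 1) (hnt : (N : ℤ) ∣ (n * nt - 1))
    (σ : ℂ ≃+* ℂ)
    (hσ : σ (Complex.exp (2 * (Real.pi : ℂ) * Complex.I / N)) =
      Complex.exp (2 * (Real.pi : ℂ) * Complex.I * nt / N))
    (γ : ℂ) (hγ0 : γ ≠ 0) (hγ : γ ^ 3 * (Real.sqrt D : ℂ) = τ 1)
    (g : ι ≃ ι)
    (hgd : ∀ X, σ (((d X : ℂ)) ^ 2 / (D : ℂ)) = ((d (g X) : ℂ)) ^ 2 / (D : ℂ))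
    (hgθ : ∀ X, σ (σ (θ X / γ)) = θ (g X) / γ) :
    (∀ a : ℤ, τ (a * n) = σ (τ a) * ((D : ℂ) / σ (D : ℂ)) * θ (g e) ^ (a * n)) ∧
    (τ 1 ≠ 0 → τ n ≠ 0) := by
  have hNne : N ≠ 0 := by omega
  have : NeZero N := ⟨hNne⟩
  have hθ0 : ∀ X, θ X ≠ 0 := fun X h => by
    have h1 := hθN X
    rw [h, zero_pow hNne] at h1
    exact one_ne_zero h1.symm
  have hσne : ∀ x : ℂ, x ≠ 0 → σ x ≠ 0 := fun x hx h => hx (by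
    have := congrArg σ.symm h
    simpa using this)
  -- the primitive root
  set ζ := Complex.exp (2 * (Real.pi : ℂ) * Complex.I / N) with hζdef
  have hζ : IsPrimitiveRoot ζ N := Complex.isPrimitiveRoot_exp N hNne
  have hσζ : σ ζ = ζ ^ (nt : ℤ) := by
    rw [hσ, hζdef, ← Complex.exp_int_mul]
    congr 1
    ring
  have hσθ : ∀ X, σ (θ X) = θ X ^ (nt : ℤ) := by
    intro X
    obtain ⟨k, -, hk⟩ := hζ.eq_pow_of_pow_eq_one (hθN X)
    rw [← hk, map_pow, hσζ, ← zpow_natCast, ← zpow_mul, mul_comm, zpow_mul, zpow_natCast]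
  have rootpow : ∀ (X : ι) (m m' : ℤ), (N : ℤ) ∣ (m - m') → θ X ^ m = θ X ^ m' := by
    rintro X m m' ⟨k, hk⟩
    have hm : m = m' + (N : ℤ) * k := by linarith
    rw [hm, zpow_add₀ (hθ0 X), zpow_mul, zpow_natCast, hθN X, one_zpow, mul_one]
  -- global dimension nonzero
  have hDpos : 0 < D := by
    rw [hD]
    exact Finset.sum_pos' (fun X _ => sq_nonneg (d X))
      ⟨e, Finset.mem_univ e, lt_of_le_of_ne (sq_nonneg (d e)) (Ne.symm (pow_ne_zero 2 (hd e)))⟩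
  have hD0 : (D : ℂ) ≠ 0 := Complex.ofReal_ne_zero.mpr (ne_of_gt hDpos)
  have hσD : σ (D : ℂ) ≠ 0 := hσne _ hD0
  have hσσγ : σ (σ γ) ≠ 0 := hσne _ (hσne _ hγ0)
  -- key relation for θ ∘ g
  have key : ∀ X, θ (g X) = γ / σ (σ γ) * θ X ^ (nt * nt) := by
    intro X
    have h := hgθ X
    rw [map_div₀, hσθ, map_div₀, map_zpow₀, hσθ, ← zpow_mul] at h
    rw [div_eq_div_iff hσσγ hγ0] at h
    rw [div_mul_eq_mul_div, eq_div_iff hσσγ]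
    linear_combination -h
  have hθg : ∀ X, θ (g X) = θ (g e) * θ X ^ (nt * nt) := fun X => by
    rw [key X, key e, hθe, one_zpow, mul_one]
  -- σ of quantum dimensions
  have hσd : ∀ X, σ (((d X : ℂ)) ^ 2) = σ (D : ℂ) * (((d (g X) : ℂ)) ^ 2 / (D : ℂ)) := by
    intro X
    have h := hgd X
    rw [map_div₀] at h
    rw [← h]
    field_simp
  have main : ∀ a : ℤ, τ (a * n) = σ (τ a) * ((D : ℂ) / σ (D : ℂ)) * θ (g e) ^ (a * n) := by
    intro a
    rw [hτ, hτ, map_sum, Finset.sum_mul, Finset.sum_mul]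
    rw [show (∑ X, θ X ^ (a * n) * ((d X : ℂ)) ^ 2)
        = ∑ X, θ (g X) ^ (a * n) * ((d (g X) : ℂ)) ^ 2 from
      (Fintype.sum_equiv g _ _ fun X => rfl).symm]
    refine Finset.sum_congr rfl fun X _ => ?_
    have hdiv : (N : ℤ) ∣ (nt * nt * (a * n) - nt * a) := by
      obtain ⟨k, hk⟩ := hnt
      exact ⟨nt * a * k, by linear_combination nt * a * hk⟩
    rw [map_mul, map_zpow₀, hσθ, hσd, hθg, mul_zpow, ← zpow_mul, ← zpow_mul,
      rootpow X _ _ hdiv]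
    field_simp
  refine ⟨main, fun h1 => ?_⟩
  have := main 1
  rw [one_mul] at this
  rw [this]
  exact mul_ne_zero (mul_ne_zero (hσne _ h1) (div_ne_zero hD0 hσD))
    (zpow_ne_zero _ (hθ0 (g e)))
end

section
/- Let (I, e, d, D, N, θ, (τ_a)) be a Gauss-sum datum, let n be an integer coprime to N and ñ an integer with n·ñ ≡ 1 (mod N), and let (σ, γ, π) be a Galois symmetry of the datum for σ. Assume τ₁ ≠ 0 and τ₋₁ ≠ 0, and for an integer a with τ_{−a} ≠ 0 define the a-th anomaly α_a := τ_a / τ_{−a}. Then τ_n ≠ 0 and τ_{−n} ≠ 0, and α_n = σ(α₁) · θ(π(e))^{2n}. Consequently, if α₁ is a root of unity then α_n is a root of unity; if moreover α₁^{2N} = 1, then α_n^{2N} = 1, and hence every ξ ∈ ℂ with ξ² = α_n satisfies ξ^{4N} = 1. -/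
/-- **Higher anomalies under Galois symmetry** (Corollary 3.6(a) of the paper, abstracted).
With a Gauss-sum datum and a Galois symmetry as in Theorem 3.5, assuming `τ 1 ≠ 0` and
`τ (-1) ≠ 0`, the higher Gauss sums `τ n` and `τ (-n)` are nonzero and the `n`-th anomaly
`α n = τ n / τ (-n)` satisfies `α n = σ (α 1) * θ (g e) ^ (2*n)`.  Consequently, if `α 1`
is a root of unity so is `α n`; and if `α 1 ^ (2*N) = 1`, then `α n ^ (2*N) = 1` and every
square root `ξ` of `α n` satisfies `ξ ^ (4*N) = 1`. -/
theorem higher_anomaly_galois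
    {ι : Type*} [Fintype ι] (e : ι)
    (d : ι → ℝ) (hd : ∀ X, d X ≠ 0)
    (D : ℝ) (hD : D = ∑ X, (d X) ^ 2)
    (N : ℕ) (hN : 1 ≤ N)
    (θ : ι → ℂ) (hθe : θ e = 1) (hθN : ∀ X, θ X ^ N = 1)
    (τ : ℤ → ℂ) (hτ : ∀ a : ℤ, τ a = ∑ X, θ X ^ a * ((d X : ℂ)) ^ 2)
    (n nt : ℤ) (hn : Int.gcd n N = 1) (hnt : (N : ℤ) ∣ (n * nt - 1))
    (σ : ℂ ≃+* ℂ)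
    (hσ : σ (Complex.exp (2 * (Real.pi : ℂ) * Complex.I / N)) =
      Complex.exp (2 * (Real.pi : ℂ) * Complex.I * nt / N))
    (γ : ℂ) (hγ0 : γ ≠ 0) (hγ : γ ^ 3 * (Real.sqrt D : ℂ) = τ 1)
    (g : ι ≃ ι)
    (hgd : ∀ X, σ (((d X : ℂ)) ^ 2 / (D : ℂ)) = ((d (g X) : ℂ)) ^ 2 / (D : ℂ))
    (hgθ : ∀ X, σ (σ (θ X / γ)) = θ (g X) / γ)
    (hτ1 : τ 1 ≠ 0) (hτm1 : τ (-1) ≠ 0) :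
    τ n ≠ 0 ∧ τ (-n) ≠ 0 ∧
    τ n / τ (-n) = σ (τ 1 / τ (-1)) * θ (g e) ^ (2 * n) ∧
    ((∃ m : ℕ, 1 ≤ m ∧ (τ 1 / τ (-1)) ^ m = 1) →
      ∃ m : ℕ, 1 ≤ m ∧ (τ n / τ (-n)) ^ m = 1) ∧
    ((τ 1 / τ (-1)) ^ (2 * N) = 1 →
      (τ n / τ (-n)) ^ (2 * N) = 1 ∧
      ∀ ξ : ℂ, ξ ^ 2 = τ n / τ (-n) → ξ ^ (4 * N) = 1) := by

  classical
  have hNpos : 0 < N := hN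
  set ζ : ℂ := Complex.exp (2 * (Real.pi : ℂ) * Complex.I / N) with hζdef
  have hζprim : IsPrimitiveRoot ζ N := Complex.isPrimitiveRoot_exp N hNpos.ne'
  have hθ0 : ∀ X, θ X ≠ 0 := by
    intro X hx
    have h := hθN X
    rw [hx, zero_pow hNpos.ne'] at h
    exact zero_ne_one h
  have hDpos : 0 < D := by
    rw [hD]
    refine Finset.sum_pos (fun X _ => ?_) ⟨e, Finset.mem_univ e⟩
    have := hd X
    positivity
  have hD0 : (D : ℂ) ≠ 0 := Complex.ofReal_ne_zero.mpr hDpos.ne'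
  have hzcong : ∀ (x : ℂ), x ^ N = 1 → ∀ a b : ℤ, (N : ℤ) ∣ (a - b) → x ^ a = x ^ b := by
    intro x hx a b hdvd
    have hx0 : x ≠ 0 := by
      intro h; rw [h, zero_pow hNpos.ne'] at hx; exact zero_ne_one hx
    obtain ⟨c, hc⟩ := hdvd
    have h1 : x ^ (a - b) = 1 := by
      rw [hc, zpow_mul, zpow_natCast, hx, one_zpow]
    have h2 := zpow_add₀ hx0 b (a - b)
    rw [show b + (a - b) = a by ring, h1, mul_one] at h2
    exact h2
  have hσζ : σ ζ = ζ ^ (nt : ℤ) := by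
    rw [hζdef, hσ, ← Complex.exp_int_mul]
    congr 1
    ring
  have : NeZero N := ⟨hNpos.ne'⟩
  have hσroot : ∀ x : ℂ, x ^ N = 1 → σ x = x ^ (nt : ℤ) := by
    intro x hx
    obtain ⟨k, -, hk⟩ := hζprim.eq_pow_of_pow_eq_one hx
    rw [← hk, map_pow, hσζ, ← zpow_natCast (ζ ^ (nt : ℤ)) k, ← zpow_natCast ζ k,
      ← zpow_mul, ← zpow_mul, mul_comm]
  have hσθ : ∀ (X : ι) (a : ℤ), σ (θ X ^ a) = θ X ^ (nt * a) := by
    intro X a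
    rw [map_zpow₀, hσroot _ (hθN X), ← zpow_mul]
  set z := θ (g e) with hzdef
  have hzN : z ^ N = 1 := hθN (g e)
  have hz0 : z ≠ 0 := hθ0 (g e)
  have hγσσ : σ (σ γ) = γ / z := by
    have h := hgθ e
    rw [hθe, map_div₀, map_div₀, map_one, map_one] at h
    have hσσγ0 : σ (σ γ) ≠ 0 := by
      simp [hγ0]
    rw [← hzdef] at h
    field_simp at h ⊢
    linear_combination -h
  have hθg : ∀ X, θ (g X) = θ X ^ (nt * nt) * z := by
    intro X
    have h := hgθ X
    rw [map_div₀, map_div₀, hσroot _ (hθN X), hσθ X nt, hγσσ] at h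
    have h2 : θ X ^ (nt * nt) / (γ / z) = θ (g X) / γ := h
    field_simp at h2
    linear_combination -h2
  have main : ∀ a : ℤ, τ (n * a) / D = z ^ (n * a) * σ (τ a / D) := by
    intro a
    have reindex : (∑ X, θ X ^ (n * a) * ((d X : ℂ)) ^ 2) / (D : ℂ)
        = ∑ X, θ (g X) ^ (n * a) * ((d (g X) : ℂ)) ^ 2 / (D : ℂ) := by
      rw [Finset.sum_div]
      exact (Equiv.sum_comp g (fun X => θ X ^ (n * a) * ((d X : ℂ)) ^ 2 / (D : ℂ))).symm
    rw [hτ, hτ, reindex, Finset.sum_div, map_sum, Finset.mul_sum]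
    refine Finset.sum_congr rfl fun X _ => ?_
    have hterm : σ (θ X ^ a * ((d X : ℂ)) ^ 2 / (D : ℂ))
        = θ X ^ (nt * a) * (((d (g X) : ℂ)) ^ 2 / (D : ℂ)) := by
      rw [mul_div_assoc, map_mul, hσθ X a, hgd X]
    rw [hterm, hθg X, mul_zpow, ← zpow_mul]
    have hcong : θ X ^ (nt * nt * (n * a)) = θ X ^ (nt * a) := by
      refine hzcong (θ X) (hθN X) _ _ ?_
      obtain ⟨c, hc⟩ := hnt
      exact ⟨nt * a * c, by rw [show nt * nt * (n * a) - nt * a = nt * a * (n * nt - 1) by ring, hc]; ring⟩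
    rw [hcong]
    ring
  have hA0 : σ (τ 1 / D) ≠ 0 := by
    simp [div_ne_zero_iff, hτ1, hD0]
  have hB0 : σ (τ (-1) / D) ≠ 0 := by
    simp [div_ne_zero_iff, hτm1, hD0]
  have h1 : τ n / D = z ^ n * σ (τ 1 / D) := by simpa using main 1
  have h2 : τ (-n) / D = z ^ (-n) * σ (τ (-1) / D) := by
    have h := main (-1)
    rw [show n * (-1) = -n by ring] at h
    exact h
  have hτn0 : τ n ≠ 0 := by
    intro h
    rw [h, zero_div] at h1
    exact (mul_ne_zero (zpow_ne_zero n hz0) hA0) h1.symm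
  have hτmn0 : τ (-n) ≠ 0 := by
    intro h
    rw [h, zero_div] at h2
    exact (mul_ne_zero (zpow_ne_zero (-n) hz0) hB0) h2.symm
  have e1 : τ n = z ^ n * σ (τ 1 / D) * D := by
    rw [← h1, div_mul_cancel₀ _ hD0]
  have e2 : τ (-n) = z ^ (-n) * σ (τ (-1) / D) * D := by
    rw [← h2, div_mul_cancel₀ _ hD0]
  have hστ : σ (τ 1 / τ (-1)) = σ (τ 1 / D) / σ (τ (-1) / D) := by
    rw [← map_div₀, div_div_div_comm, div_self hD0, div_one]
  have hzn0 : z ^ n ≠ 0 := zpow_ne_zero n hz0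
  have hdd : τ n / ↑D / (τ (-n) / ↑D) = τ n / τ (-n) := by
    rw [div_div_div_comm, div_self hD0, div_one]
  have hratio : τ n / τ (-n) = σ (τ 1 / τ (-1)) * z ^ (2 * n) := by
    rw [← hdd, h1, h2, hστ, zpow_neg, show (2 : ℤ) * n = n + n from two_mul n,
      zpow_add₀ hz0]
    field_simp
  have hzc : ∀ c : ℤ, z ^ (c * (N : ℤ)) = 1 := by
    intro c
    rw [mul_comm c (N : ℤ), zpow_mul, zpow_natCast, hzN, one_zpow]
  have key : ∀ k : ℕ, (z ^ ((2 : ℤ) * n)) ^ (k * N) = 1 := by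
    intro k
    rw [← zpow_natCast (z ^ ((2 : ℤ) * n)) (k * N), ← zpow_mul]
    rw [show (2 : ℤ) * n * ((k * N : ℕ) : ℤ) = (2 * n * k) * (N : ℤ) by push_cast; ring]
    exact hzc _
  refine ⟨hτn0, hτmn0, hratio, ?_, ?_⟩
  · rintro ⟨m, hm1, hm⟩
    refine ⟨m * N, Nat.mul_pos hm1 hNpos, ?_⟩
    rw [hratio, mul_pow, key m, mul_one, pow_mul, ← map_pow, hm, map_one, one_pow]
  · intro hα1
    have hαn : (τ n / τ (-n)) ^ (2 * N) = 1 := by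
      rw [hratio, mul_pow, key 2, mul_one, ← map_pow, hα1, map_one]
    refine ⟨hαn, fun ξ hξ => ?_⟩
    rw [show 4 * N = 2 * (2 * N) by ring, pow_mul, hξ, hαn]
end

section
/- Let (I, e, d, D, N, θ, (τ_a)) be a Gauss-sum datum, let n be an integer coprime to N and ñ an integer with n·ñ ≡ 1 (mod N), and let (σ, γ, π) be a Galois symmetry of the datum for σ in which γ = 1 (so that τ₁ = √D). Write c := √D > 0 and assume in addition that σ(c) is a positive real number and that τ₋₁ = c. Then: (i) θ(π(e)) = 1; (ii) for every integer a, τ_{a·n} = σ(τ_a) · D / σ(D); and (iii) τ_n = τ_{−n} = c² / σ(c), which is a positive real number, so that τ_n / |τ_n| = 1. -/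
/-!
The Galois automorphism `σ` acts on `N`-th roots of unity by `z ↦ z ^ ñ`, so `σ ∘ σ` raises
twists to the power `ñ²`; since `n ñ ≡ 1 (mod N)`, the twist `θ(π X)^(a n)` equals
`θ(X)^(ñ a) = σ(θ(X)^a)`. Reindexing the Gauss sum `τ_{a n}` along `π` and using
`σ(d(X)²) = d(π X)² σ(D) / D` gives `σ(τ_a) = (σ(D) / D) τ_{a n}`. For `a = ±1` we have
`τ_a = c` and `D = c²`, whence `τ_{±n} = σ(c) c² / σ(c)² = c² / σ(c)`.
-/

open Finset

theorem zpow_eq_zpow_of_pow_eq_one {G₀ : Type*} [GroupWithZero G₀] {z : G₀} {N : ℕ}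
    (hz : z ^ N = 1) {s t : ℤ} (hst : (N : ℤ) ∣ s - t) : z ^ s = z ^ t := by
  obtain ⟨q, hq⟩ := hst
  rw [show s = t + N * q by linarith]
  rcases eq_or_ne z 0 with rfl | hz0
  · obtain rfl : N = 0 := zero_pow_eq_one₀.mp hz
    simp
  · rw [zpow_add₀ hz0, zpow_mul, zpow_natCast, hz, one_zpow, mul_one]

theorem IsPrimitiveRoot.map_eq_zpow_of_pow_eq_one {K F : Type*} [Field K] [FunLike F K K]
    [RingHomClass F K K] {σ : F} {ζ : K} {N : ℕ} [NeZero N] (hζ : IsPrimitiveRoot ζ N)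
    {k : ℤ} (hσζ : σ ζ = ζ ^ k) {z : K} (hz : z ^ N = 1) : σ z = z ^ k := by
  obtain ⟨i, -, rfl⟩ := hζ.eq_pow_of_pow_eq_one hz
  rw [map_pow, hσζ, ← zpow_natCast, ← zpow_natCast, ← zpow_mul, ← zpow_mul, mul_comm]

theorem map_mul_sq_div_map_sq {K F : Type*} [Field K] [FunLike F K K] [RingHomClass F K K]
    (σ : F) (c : K) :
    σ c * c ^ 2 / σ (c ^ 2) = c ^ 2 / σ c := by
  rw [map_pow]
  rcases eq_or_ne (σ c) 0 with h | h
  · simp [h]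
  · field_simp

section GaussSum

variable {K F ι : Type*} [Field K] [FunLike F K K] [RingHomClass F K K] [Fintype ι]

def weightedGaussSum (θ w : ι → K) (a : ℤ) : K :=
  ∑ X, θ X ^ a * w X

theorem map_weightedGaussSum (σ : F) (g : ι ≃ ι) {N : ℕ} {θ w : ι → K} {s : K}
    {n nt : ℤ} (hθN : ∀ X, θ X ^ N = 1) (hnt : (N : ℤ) ∣ n * nt - 1)
    (hσθ : ∀ X, σ (θ X) = θ X ^ nt) (hgθ : ∀ X, σ (σ (θ X)) = θ (g X))
    (hgw : ∀ X, σ (w X) = s * w (g X)) (a : ℤ) :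
    σ (weightedGaussSum θ w a) = s * weightedGaussSum θ w (a * n) := by
  unfold weightedGaussSum
  rw [map_sum, ← Equiv.sum_comp g (fun X => θ X ^ (a * n) * w X), mul_sum]
  refine sum_congr rfl fun X _ => ?_
  have hθg : θ (g X) ^ (a * n) = θ X ^ (nt * a) := by
    rw [← hgθ, hσθ, map_zpow₀, hσθ, ← zpow_mul, ← zpow_mul]
    refine zpow_eq_zpow_of_pow_eq_one (hθN X) ?_
    rw [show nt * (nt * (a * n)) - nt * a = nt * a * (n * nt - 1) by ring]
    exact dvd_mul_of_dvd_right hnt _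
  rw [map_mul, map_zpow₀, hσθ, hgw, hθg, ← zpow_mul]
  ring

end GaussSum

theorem gauss_sum_of_center_galois_general
    {ι : Type*} [Fintype ι] (e : ι)
    (d : ι → ℝ)
    (D : ℝ)
    (N : ℕ) (hN : 1 ≤ N)
    (θ : ι → ℂ) (hθe : θ e = 1) (hθN : ∀ X, θ X ^ N = 1)
    (τ : ℤ → ℂ) (hτ : ∀ a : ℤ, τ a = ∑ X, θ X ^ a * ((d X : ℂ)) ^ 2)
    (n nt : ℤ) (hnt : (N : ℤ) ∣ (n * nt - 1))
    (σ : ℂ ≃+* ℂ)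
    (hσ : σ (Complex.exp (2 * (Real.pi : ℂ) * Complex.I / N)) =
      Complex.exp (2 * (Real.pi : ℂ) * Complex.I * nt / N))
    (γ : ℂ) (hγ : γ ^ 3 * (Real.sqrt D : ℂ) = τ 1)
    (g : ι ≃ ι)
    (hgd : ∀ X, σ (((d X : ℂ)) ^ 2 / (D : ℂ)) = ((d (g X) : ℂ)) ^ 2 / (D : ℂ))
    (hgθ : ∀ X, σ (σ (θ X / γ)) = θ (g X) / γ)
    (hγ1 : γ = 1)
    (c : ℝ) (hc : c = Real.sqrt D) (hcpos : 0 < c)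
    (hσc : ∃ r : ℝ, 0 < r ∧ σ (c : ℂ) = (r : ℂ))
    (hτm1 : τ (-1) = (c : ℂ)) :
    θ (g e) = 1 ∧
    (∀ a : ℤ, τ (a * n) = σ (τ a) * (D : ℂ) / σ (D : ℂ)) ∧
    (τ n = τ (-n) ∧ τ n = (c : ℂ) ^ 2 / σ (c : ℂ) ∧
      (∃ r : ℝ, 0 < r ∧ τ n = (r : ℂ)) ∧
      τ n / ((‖τ n‖ : ℝ) : ℂ) = 1) := by
  subst hγ1
  simp only [div_one] at hgθ
  have : NeZero N := ⟨by omega⟩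
  have hσθ (X : ι) : σ (θ X) = θ X ^ nt :=
    (Complex.isPrimitiveRoot_exp N (NeZero.ne N)).map_eq_zpow_of_pow_eq_one
      (σ := σ) (by rw [hσ, ← Complex.exp_int_mul]; ring_nf) (hθN X)
  have hDc : (D : ℂ) = (c : ℂ) ^ 2 := by
    rw [hc, ← Complex.ofReal_pow, Real.sq_sqrt (Real.sqrt_pos.mp (hc ▸ hcpos)).le]
  have hD0 : (D : ℂ) ≠ 0 := by rw [hDc]; exact pow_ne_zero 2 (by exact_mod_cast hcpos.ne')
  have hgw (X : ι) : σ ((d X : ℂ) ^ 2) = σ D / D * (d (g X) : ℂ) ^ 2 := by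
    rw [← div_mul_cancel₀ ((d X : ℂ) ^ 2) hD0, map_mul, hgd]
    ring
  have hτ_galois (a : ℤ) : τ (a * n) = σ (τ a) * D / σ D := by
    rw [show τ = weightedGaussSum θ (fun X => (d X : ℂ) ^ 2) from funext hτ,
      map_weightedGaussSum σ g hθN hnt hσθ hgθ hgw]
    field_simp [(map_ne_zero σ).mpr hD0]
  have hτ_of_eq_c {a : ℤ} (ha : τ a = c) : τ (a * n) = (c : ℂ) ^ 2 / σ c := by
    rw [hτ_galois, ha, hDc]
    exact map_mul_sq_div_map_sq σ (c : ℂ)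
  have hτn : τ n = (c : ℂ) ^ 2 / σ c := by
    simpa using hτ_of_eq_c (a := 1) (by rw [← hγ, hc]; simp)
  obtain ⟨r, hr, hσr⟩ := hσc
  have hpos : 0 < c ^ 2 / r := by positivity
  have hτn_real : τ n = ((c ^ 2 / r : ℝ) : ℂ) := by rw [hτn, hσr]; push_cast; rfl
  have hθge : θ (g e) = 1 := by rw [← hgθ, hθe, map_one, map_one]
  refine ⟨hθge, hτ_galois, ?_, hτn, ⟨_, hpos, hτn_real⟩, ?_⟩
  · simpa [hτn] using (hτ_of_eq_c hτm1).symm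
  · rw [hτn_real, Complex.norm_real, Real.norm_of_nonneg hpos.le,
      div_self (by exact_mod_cast hpos.ne')]

/-- **Gauss sums of Drinfeld centers** (Theorem 3.10 of the paper, abstracted).
With a Gauss-sum datum and a Galois symmetry as in Theorem 3.5, in which `γ = 1`
(so that `τ 1 = √D`), writing `c = √D > 0` and assuming `σ c` is a positive real and
`τ (-1) = c`, one has: (i) `θ (g e) = 1`; (ii) `τ (a*n) = σ (τ a) * D / σ D` for every
integer `a`; and (iii) `τ n = τ (-n) = c² / σ c`, a positive real number, so that
`τ n / |τ n| = 1`. -/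
theorem gauss_sum_of_center_galois
    {ι : Type*} [Fintype ι] (e : ι)
    (d : ι → ℝ) (hd : ∀ X, d X ≠ 0)
    (D : ℝ) (hD : D = ∑ X, (d X) ^ 2)
    (N : ℕ) (hN : 1 ≤ N)
    (θ : ι → ℂ) (hθe : θ e = 1) (hθN : ∀ X, θ X ^ N = 1)
    (τ : ℤ → ℂ) (hτ : ∀ a : ℤ, τ a = ∑ X, θ X ^ a * ((d X : ℂ)) ^ 2)
    (n nt : ℤ) (hn : Int.gcd n N = 1) (hnt : (N : ℤ) ∣ (n * nt - 1))
    (σ : ℂ ≃+* ℂ)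
    (hσ : σ (Complex.exp (2 * (Real.pi : ℂ) * Complex.I / N)) =
      Complex.exp (2 * (Real.pi : ℂ) * Complex.I * nt / N))
    (γ : ℂ) (hγ0 : γ ≠ 0) (hγ : γ ^ 3 * (Real.sqrt D : ℂ) = τ 1)
    (g : ι ≃ ι)
    (hgd : ∀ X, σ (((d X : ℂ)) ^ 2 / (D : ℂ)) = ((d (g X) : ℂ)) ^ 2 / (D : ℂ))
    (hgθ : ∀ X, σ (σ (θ X / γ)) = θ (g X) / γ)
    (hγ1 : γ = 1)
    (c : ℝ) (hc : c = Real.sqrt D) (hcpos : 0 < c)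
    (hσc : ∃ r : ℝ, 0 < r ∧ σ (c : ℂ) = (r : ℂ))
    (hτm1 : τ (-1) = (c : ℂ)) :
    θ (g e) = 1 ∧
    (∀ a : ℤ, τ (a * n) = σ (τ a) * (D : ℂ) / σ (D : ℂ)) ∧
    (τ n = τ (-n) ∧ τ n = (c : ℂ) ^ 2 / σ (c : ℂ) ∧
      (∃ r : ℝ, 0 < r ∧ τ n = (r : ℂ)) ∧
      τ n / ((‖τ n‖ : ℝ) : ℂ) = 1) :=
  gauss_sum_of_center_galois_general e d D N hN θ hθe hθN τ hτ n nt hnt σ hσ γ hγ g hgd hgθ hγ1 c hc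
    hcpos hσc hτm1
end

section
/- Let ω = exp(2πi/3) ∈ ℂ and set x = (5 + 4ω²)/(5 + 4ω). Then: (i) 7x² + 2x + 7 = 0; (ii) |x| = 1; (iii) x is not integral over ℤ (its minimal polynomial over ℚ is x² + (2/7)x + 1, which is not monic with integer coefficients); and (iv) x is not a root of unity, i.e. x^m ≠ 1 for every integer m ≥ 1. -/
/-!
With `z = 5 + 4ω` we have `conj z = 5 + 4ω²`, so `x = conj z / z` lies on the unit circle and
`conj x = x⁻¹`. The relation `ω² + ω + 1 = 0` turns `x = conj z / z` into `7x² + 2x + 7 = 0`,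
hence `x + conj x = x + x⁻¹ = -2/7`. If `x` were integral over `ℤ`, so would be `conj x` and
thus the rational number `-2/7`, which is absurd; a root of unity is always integral.
-/

open ComplexConjugate

theorem IsPrimitiveRoot.sq_add_self_add_one {R : Type*} [CommRing R] [IsDomain R] {ω : R}
    (hω : IsPrimitiveRoot ω 3) : ω ^ 2 + ω + 1 = 0 := by
  have h := hω.geom_sum_eq_zero (by norm_num : 1 < 3)
  simp only [Finset.sum_range_succ, Finset.sum_range_zero] at h
  linear_combination h

theorem Complex.conj_eq_pow_pred_of_pow_eq_one {ζ : ℂ} {n : ℕ} (h : ζ ^ n = 1) (hn : n ≠ 0) :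
    conj ζ = ζ ^ (n - 1) := by
  rw [← RCLike.inv_eq_conj (Complex.norm_eq_one_of_pow_eq_one h hn)]
  refine inv_eq_of_mul_eq_one_right ?_
  rw [← pow_succ', Nat.sub_add_cancel (Nat.one_le_iff_ne_zero.mpr hn), h]

theorem Complex.not_isIntegral_of_add_conj_eq_ratCast {x : ℂ} {q : ℚ} (h : x + conj x = q)
    (hq : q ∉ Set.range ((↑) : ℤ → ℚ)) : ¬ IsIntegral ℤ x := by
  intro hx
  have hsum : IsIntegral ℤ (x + conj x) := hx.add (hx.map (starRingEnd ℂ).toIntAlgHom)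
  obtain ⟨k, hk⟩ := (hsum.exists_int_iff_exists_rat).mp ⟨q, h⟩
  exact hq ⟨k, by exact_mod_cast (h.symm.trans hk).symm⟩

theorem pow_ne_one_of_not_isIntegral {R A : Type*} [CommRing R] [Ring A] [Algebra R A] {x : A}
    (hx : ¬ IsIntegral R x) {m : ℕ} (hm : 0 < m) : x ^ m ≠ 1 :=
  fun h ↦ hx (.of_pow hm (h ▸ isIntegral_one))

section EisensteinQuotient

variable {ω : ℂ} (hω : ω ^ 2 + ω + 1 = 0)
include hω

theorem five_add_four_mul_ne_zero_of_sq_add_self_add_one : 5 + 4 * ω ≠ 0 := by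
  intro h
  have : (21 : ℂ) = 0 := by linear_combination 16 * hω - (4 * ω - 1) * h
  norm_num at this

theorem seven_mul_sq_add_two_mul_add_seven_eq_zero_of_sq_add_self_add_one :
    7 * ((5 + 4 * ω ^ 2) / (5 + 4 * ω)) ^ 2 + 2 * ((5 + 4 * ω ^ 2) / (5 + 4 * ω)) + 7 = 0 := by
  have hz := five_add_four_mul_ne_zero_of_sq_add_self_add_one hω
  field_simp
  linear_combination (112 * ω ^ 2 - 80 * ω + 400) * hω

end EisensteinQuotient

/-- **A non-root-of-unity anomaly** (Example 3.11 of the paper).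
For `ω = exp(2πi/3)` and `x = (5 + 4ω²)/(5 + 4ω)`: (i) `7x² + 2x + 7 = 0`;
(ii) `|x| = 1`; (iii) `x` is not integral over `ℤ`; and (iv) `x` is not a root of
unity. -/
theorem anomaly_not_root_of_unity
    (ω x : ℂ)
    (hω : ω = Complex.exp (2 * (Real.pi : ℂ) * Complex.I / 3))
    (hx : x = (5 + 4 * ω ^ 2) / (5 + 4 * ω)) :
    7 * x ^ 2 + 2 * x + 7 = 0 ∧
    ‖x‖ = 1 ∧
    ¬ IsIntegral ℤ x ∧
    ∀ m : ℕ, 1 ≤ m → x ^ m ≠ 1 := by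
  have hω3 : IsPrimitiveRoot ω 3 := hω ▸ Complex.isPrimitiveRoot_exp 3 (by norm_num)
  have hrel := hω3.sq_add_self_add_one
  have hz := five_add_four_mul_ne_zero_of_sq_add_self_add_one hrel
  have hx_conj : x = conj (5 + 4 * ω) / (5 + 4 * ω) := by
    rw [hx, map_add, map_mul, Complex.conj_eq_pow_pred_of_pow_eq_one hω3.pow_eq_one three_ne_zero,
      map_ofNat, map_ofNat]
  have hquad : 7 * x ^ 2 + 2 * x + 7 = 0 := hx ▸ seven_mul_sq_add_two_mul_add_seven_eq_zero_of_sq_add_self_add_one hrel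
  have hnorm : ‖x‖ = 1 := hx_conj ▸ Circle.norm_coe (.ofConjDivSelf _ hz)
  have hsum : x + conj x = ((-2 / 7 : ℚ) : ℂ) := by
    have hx0 : x ≠ 0 := norm_ne_zero_iff.mp (hnorm.trans_ne one_ne_zero)
    rw [← RCLike.inv_eq_conj hnorm]
    field_simp
    linear_combination hquad / 7
  have hnot_int : ¬ IsIntegral ℤ x := Complex.not_isIntegral_of_add_conj_eq_ratCast hsum <| by
    rintro ⟨k, hk⟩
    have : 7 * k = -2 := by exact_mod_cast (by linarith : (7 * k : ℚ) = -2)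
    omega
  exact ⟨hquad, hnorm, hnot_int, fun m hm ↦ pow_ne_one_of_not_isIntegral hnot_int hm⟩
end

section
/- Let x = (√7 − i)/(2√2) ∈ ℂ, where √7 and √2 are the positive real square roots and i = √(−1). Then: (i) 2x⁴ − 3x² + 2 = 0; (ii) |x| = 1; (iii) x is not integral over ℤ (its minimal polynomial over ℚ is x⁴ − (3/2)x² + 1, which is not monic with integer coefficients); and (iv) x is not a root of unity, i.e. x^m ≠ 1 for every integer m ≥ 1. -/
/-!
Write `x = a + b i` with `a = √7/(2√2)`, `b = −1/(2√2)`. Then `|x|² = 7/8 + 1/8 = 1` and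
`w = x²` has `|w| = 1` and `Re w = 7/8 − 1/8 = 3/4`, so `w` is a root of
`t² − 2 Re(w) t + |w|² = t² − (3/2) t + 1`, which gives `2x⁴ − 3x² + 2 = 0`.
If `x` were integral over `ℤ`, so would be `w + w̄ = 3/2`, which is not an integer.
A root of unity is a root of the monic `X^m − 1`, hence integral, so `x` is not one.
-/

open Complex ComplexConjugate

namespace Complex

theorem sq_sub_two_re_mul_add_normSq (z : ℂ) : z ^ 2 - 2 * z.re * z + normSq z = 0 := by
  have h := add_conj z
  push_cast at h
  rw [← mul_conj, ← h]
  ring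

theorem isIntegral_int_conj {z : ℂ} (hz : IsIntegral ℤ z) : IsIntegral ℤ (conj z) :=
  hz.map (starRingEnd ℂ).toIntAlgHom

theorem not_isIntegral_int_of_two_mul_re_eq {z : ℂ} {q : ℚ} (hz : 2 * z.re = q)
    (hq : q.den ≠ 1) : ¬ IsIntegral ℤ z := by
  intro hint
  have htrace : IsIntegral ℤ (algebraMap ℚ ℂ q) := by
    have h := add_conj z
    rw [hz] at h
    simpa [h] using hint.add (isIntegral_int_conj hint)
  obtain ⟨n, rfl⟩ := IsIntegrallyClosed.isIntegral_iff.mp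
    ((isIntegral_algebraMap_iff (algebraMap ℚ ℂ).injective).mp htrace)
  exact hq (by simp)

end Complex

noncomputable def ξ₃ : ℂ := ((Real.sqrt 7 : ℂ) - I) / (2 * (Real.sqrt 2 : ℂ))

theorem ξ₃_eq_mk : ξ₃ = ⟨√7 / (2 * √2), -1 / (2 * √2)⟩ := by
  have hden : 2 * (√2 : ℂ) = ((2 * √2 : ℝ) : ℂ) := by push_cast; rfl
  rw [ξ₃, hden]
  apply Complex.ext
  · rw [div_ofReal_re]; simp
  · rw [div_ofReal_im]; simp

theorem normSq_ξ₃ : normSq ξ₃ = 1 := by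
  rw [ξ₃_eq_mk, normSq_mk]
  field_simp
  norm_num

theorem re_ξ₃_sq : (ξ₃ ^ 2).re = 3 / 4 := by
  rw [ξ₃_eq_mk, sq, mul_re]
  field_simp
  norm_num

/-- **A central charge of modulus one that is not a root of unity** (Example 3.3 of the
paper, the third central charge of `C(g₂, 3)`).  For `x = (√7 − i)/(2√2)`:
(i) `2x⁴ − 3x² + 2 = 0`; (ii) `|x| = 1`; (iii) `x` is not integral over `ℤ`; and
(iv) `x` is not a root of unity. -/
theorem central_charge_g2_not_root_of_unity
    (x : ℂ)
    (hx : x = ((Real.sqrt 7 : ℂ) - Complex.I) / (2 * (Real.sqrt 2 : ℂ))) :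
    2 * x ^ 4 - 3 * x ^ 2 + 2 = 0 ∧
    ‖x‖ = 1 ∧
    ¬ IsIntegral ℤ x ∧
    ∀ m : ℕ, 1 ≤ m → x ^ m ≠ 1 := by
  obtain rfl : x = ξ₃ := hx
  have hquad := sq_sub_two_re_mul_add_normSq (ξ₃ ^ 2)
  rw [re_ξ₃_sq, map_pow, normSq_ξ₃] at hquad
  have hnot_integral : ¬ IsIntegral ℤ ξ₃ := fun h ↦
    not_isIntegral_int_of_two_mul_re_eq (q := 3 / 2) (by rw [re_ξ₃_sq]; norm_num) (by norm_num)
      (h.pow 2)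
  refine ⟨?_, by rw [norm_def, normSq_ξ₃, Real.sqrt_one], hnot_integral, ?_⟩
  · push_cast at hquad
    linear_combination 2 * hquad
  · intro m hm hpow
    exact hnot_integral (.of_pow hm (hpow ▸ isIntegral_one))
end

section
/- Let A be a finite abelian group (written additively) and let q : A → ℂ be a function with q(a) ≠ 0 for all a ∈ A such that the associated form b(x, y) := q(x + y)·q(x)⁻¹·q(y)⁻¹ is biadditive, i.e. b(x + x′, y) = b(x, y)·b(x′, y) and b(x, y + y′) = b(x, y)·b(x, y′) for all x, x′, y, y′ ∈ A. Let H be a subgroup of A with q(h) = 1 for all h ∈ H (H is isotropic), and set H⊥ := {a ∈ A : b(a, h) = 1 for all h ∈ H}. Then: (i) H ⊆ H⊥; (ii) q is constant on each coset a + H with a ∈ H⊥; and (iii) ∑_{a ∈ A} q(a) = ∑_{a ∈ H⊥} q(a) = |H| · ∑_{C} q(C), where the last sum runs over the cosets C of H contained in H⊥ and q(C) denotes the common value of q on C. -/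
/-- **Condensation by an isotropic subgroup for pointed categories**
(the pointed instance of Theorem 4.8 of the paper).  Let `A` be a finite abelian group,
`q : A → ℂ` nowhere vanishing with biadditive associated form
`b x y = q (x+y) q(x)⁻¹ q(y)⁻¹`, `H ≤ A` isotropic (`q ≡ 1` on `H`), and
`H⊥ = {a | ∀ h ∈ H, b a h = 1}`.  Then `H ⊆ H⊥`, `q` is constant on each coset `a + H`
with `a ∈ H⊥`, and `∑_{a ∈ A} q a = ∑_{a ∈ H⊥} q a = |H| · ∑_C q(C)`, the last sum
running over the cosets `C` of `H` contained in `H⊥` (represented by any section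
`rep : A ⧸ H → A`). -/
theorem isotropic_condensation_gauss_sum
    {A : Type*} [AddCommGroup A] [Fintype A]
    (q : A → ℂ) (hq0 : ∀ a, q a ≠ 0)
    (b : A → A → ℂ) (hb : ∀ x y, b x y = q (x + y) * (q x)⁻¹ * (q y)⁻¹)
    (hbl : ∀ x x' y, b (x + x') y = b x y * b x' y)
    (hbr : ∀ x y y', b x (y + y') = b x y * b x y')
    (H : AddSubgroup A) (hH : ∀ h ∈ H, q h = 1)
    (Hperp : Set A) (hHperp : Hperp = {a : A | ∀ h ∈ H, b a h = 1}) :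
    (H : Set A) ⊆ Hperp ∧
    (∀ a ∈ Hperp, ∀ h ∈ H, q (a + h) = q a) ∧
    (∑ a : A, q a = ∑ᶠ a ∈ Hperp, q a) ∧
    (∀ rep : A ⧸ H → A, (∀ c : A ⧸ H, (QuotientAddGroup.mk (rep c) : A ⧸ H) = c) →
      ∑ᶠ a ∈ Hperp, q a
        = (Nat.card H : ℂ) *
          ∑ᶠ c ∈ ((QuotientAddGroup.mk : A → A ⧸ H) '' Hperp), q (rep c)) := by
  classical
  subst hHperp
  letI : Fintype H := Fintype.ofFinite H
  set Hp : Set A := {a : A | ∀ h ∈ H, b a h = 1} with hHp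
  have hq00 : q 0 = 1 := hH 0 H.zero_mem
  have hmem : ∀ a h, h ∈ H → q (a + h) = b a h * q a := by
    intro a h hh
    rw [hb, hH h hh]
    field_simp
    rw [mul_div_assoc, div_self (hq0 a), mul_one]
  -- (i)
  have part1 : (H : Set A) ⊆ Hp := by
    intro h hh h' hh'
    rw [hb, hH _ (H.add_mem hh hh'), hH _ hh, hH _ hh']
    norm_num
  -- (ii)
  have part2 : ∀ a ∈ Hp, ∀ h ∈ H, q (a + h) = q a := by
    intro a ha h hh
    rw [hmem a h hh, ha h hh, one_mul]
  -- Hp is closed under translation by H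
  have hclosed : ∀ a ∈ Hp, ∀ h ∈ H, a + h ∈ Hp := by
    intro a ha h hh h' hh'
    rw [hbl, ha h' hh', part1 hh h' hh', one_mul]
  have hcoset : ∀ a a' : A, a' ∈ Hp → (QuotientAddGroup.mk a' : A ⧸ H) = QuotientAddGroup.mk a →
      a ∈ Hp := by
    intro a a' ha' he
    have : -a' + a ∈ H := (QuotientAddGroup.eq).1 he
    have := hclosed a' ha' _ this
    simpa using this
  -- key coset sum lemma
  have hcard : (Nat.card H : ℂ) = (Fintype.card H : ℂ) := by rw [Nat.card_eq_fintype_card]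
  have cosetSum : ∀ a : A, ∑ h : H, q (a + h) = if a ∈ Hp then (Nat.card H : ℂ) * q a else 0 := by
    intro a
    have h1 : ∑ h : H, q (a + h) = (∑ h : H, b a h) * q a := by
      rw [Finset.sum_mul]
      exact Finset.sum_congr rfl fun h _ => hmem a h h.2
    by_cases ha : a ∈ Hp
    · rw [if_pos ha, h1, hcard]
      congr 1
      rw [Finset.sum_congr rfl fun (h : H) _ => ha h h.2]
      simp
    · rw [if_neg ha, h1]
      obtain ⟨h0, hh0, hne⟩ : ∃ h0 ∈ H, b a h0 ≠ 1 := by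
        by_contra hc
        push_neg at hc
        exact ha hc
      have hS : b a h0 * ∑ h : H, b a h = ∑ h : H, b a h := by
        rw [Finset.mul_sum]
        calc ∑ h : H, b a h0 * b a h = ∑ h : H, b a ((((⟨h0, hh0⟩ : H) + h : H)) : A) := by
              refine Finset.sum_congr rfl fun h _ => ?_
              rw [← hbr]; rfl
          _ = ∑ h : H, b a h := Equiv.sum_comp (Equiv.addLeft (⟨h0, hh0⟩ : H)) (fun h : H => b a h)
      have : (b a h0 - 1) * ∑ h : H, b a h = 0 := by ring_nf; linear_combination hS
      rcases mul_eq_zero.1 this with h | h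
      · exact absurd (sub_eq_zero.1 h) hne
      · rw [h, zero_mul]
  have hNne : (Nat.card H : ℂ) ≠ 0 := by
    rw [hcard]
    exact_mod_cast Fintype.card_ne_zero
  -- Finset versions
  set P : Finset A := Finset.univ.filter (· ∈ Hp) with hP
  have hPmem : ∀ a, a ∈ P ↔ a ∈ Hp := by intro a; simp [hP]
  have hPcoe : (P : Set A) = Hp := by ext a; simp [hPmem]
  have hfinsum : ∑ᶠ a ∈ Hp, q a = ∑ a ∈ P, q a := by
    rw [← hPcoe, finsum_mem_coe_finset]
  -- (iii)
  have part3 : ∑ a : A, q a = ∑ a ∈ P, q a := by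
    have key : (Nat.card H : ℂ) * ∑ a : A, q a = (Nat.card H : ℂ) * ∑ a ∈ P, q a := by
      have lhs : ∑ a : A, ∑ h : H, q (a + h) = (Nat.card H : ℂ) * ∑ a : A, q a := by
        rw [Finset.sum_comm]
        have : ∀ h : H, ∑ a : A, q (a + h) = ∑ a : A, q a := fun h =>
          Equiv.sum_comp (Equiv.addRight (h : A)) q
        rw [Finset.sum_congr rfl fun h _ => this h]
        simp [hcard, Finset.sum_const, nsmul_eq_mul]
      have rhs : ∑ a : A, ∑ h : H, q (a + h) = (Nat.card H : ℂ) * ∑ a ∈ P, q a := by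
        rw [Finset.sum_congr rfl fun a _ => cosetSum a, ← Finset.sum_filter, ← hP,
          Finset.mul_sum]
      rw [← lhs, rhs]
    exact mul_left_cancel₀ hNne key
  refine ⟨part1, part2, by rw [part3, hfinsum], ?_⟩
  -- (iv)
  intro rep hrep
  set Q : Finset (A ⧸ H) := P.image (QuotientAddGroup.mk) with hQ
  have hQcoe : (Q : Set (A ⧸ H)) = (QuotientAddGroup.mk : A → A ⧸ H) '' Hp := by
    rw [hQ, Finset.coe_image, hPcoe]
  have hfinsum2 : ∑ᶠ c ∈ ((QuotientAddGroup.mk : A → A ⧸ H) '' Hp), q (rep c)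
      = ∑ c ∈ Q, q (rep c) := by rw [← hQcoe, finsum_mem_coe_finset]
  rw [hfinsum, hfinsum2]
  have hsplit : ∑ c ∈ Q, ∑ a ∈ P.filter (fun a => (QuotientAddGroup.mk a : A ⧸ H) = c), q a
      = ∑ a ∈ P, q a := by
    apply Finset.sum_fiberwise_of_maps_to
    intro a ha
    exact Finset.mem_image_of_mem _ ha
  rw [← hsplit, Finset.mul_sum]
  refine Finset.sum_congr rfl fun c hc => ?_
  obtain ⟨a0, ha0P, ha0⟩ := Finset.mem_image.1 hc
  have hrepc : rep c ∈ Hp := by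
    refine hcoset (rep c) a0 ((hPmem a0).1 ha0P) ?_
    rw [ha0, hrep c]
  have hfilter : P.filter (fun a => (QuotientAddGroup.mk a : A ⧸ H) = c)
      = Finset.image (fun h : H => rep c + (h : A)) Finset.univ := by
    ext a
    simp only [Finset.mem_filter, Finset.mem_image, Finset.mem_univ, true_and, hPmem]
    constructor
    · rintro ⟨haP, hac⟩
      have hmem' : -rep c + a ∈ H := by
        apply (QuotientAddGroup.eq).1
        rw [hrep c, hac]
      exact ⟨⟨-rep c + a, hmem'⟩, by simp⟩
    · rintro ⟨h, rfl⟩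
      refine ⟨hclosed _ hrepc _ h.2, ?_⟩
      have h2 : (QuotientAddGroup.mk (rep c + (h : A)) : A ⧸ H) = QuotientAddGroup.mk (rep c) :=
        ((QuotientAddGroup.eq).2 (by simp)).symm
      rw [h2, hrep c]
  rw [hfilter, Finset.sum_image (by
    intro x _ y _ hxy
    exact Subtype.ext (by simpa using hxy))]
  rw [show ∑ h : H, q (rep c + (h : A)) = _ from cosetSum (rep c), if_pos hrepc]
end
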